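/- arXiv:2403.09378 — 11 statements merged into one kernel-verified Lean document; each statement's English description precedes it below -/
import Mathlib

section
/- Let s_1 < s_2 < ... < s_r be segments in [-1,1] that are pairwise disjoint in measure, and suppose the segmental interpolation problem (prescribing integrals over each s_i) is unisolvent for polynomials of degree r-1. Then each Lagrange basis polynomial ℓ̂_{s_j} (the unique polynomial of degree r-1 with ∫_{s_i} ℓ̂_{s_j} = δ_{ij}) has exactly one zero in each segment s_i with i ≠ j, and has no other zeros. -/
open Polynomial intervalIntegral

/-- For a unisolvent set of segments in [-1,1], disjoint in measure,
each segmental Lagrange basis polynomial has exactly one zero in each other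
segment and no other zeros. -/
theorem stmt0 (r : ℕ) (hr : 0 < r) (α β : Fin r → ℝ)
    (hI : ∀ i, -1 ≤ α i ∧ β i ≤ 1) (hlen : ∀ i, α i < β i)
    (horder : ∀ i j : Fin r, i < j → β i ≤ α j)
    (huni : ∀ p : Polynomial ℝ, p.degree < (r : ℕ) →
      (∀ i, (∫ x in (α i)..(β i), p.eval x) = 0) → p = 0)
    (ℓ : Fin r → Polynomial ℝ) (hdeg : ∀ j, (ℓ j).degree < (r : ℕ))
    (hdual : ∀ i j, (∫ x in (α i)..(β i), (ℓ j).eval x) = if i = j then 1 else 0) :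
    ∀ j : Fin r,
      (∀ i : Fin r, i ≠ j → ∃! x, x ∈ Set.Icc (α i) (β i) ∧ (ℓ j).eval x = 0) ∧
      (∀ x : ℝ, (ℓ j).eval x = 0 → ∃ i : Fin r, i ≠ j ∧ x ∈ Set.Icc (α i) (β i)) := by
  intro j
  set p := ℓ j with hpdef
  have hp0 : p ≠ 0 := by
    intro h
    have h1 := hdual j j
    rw [if_pos rfl] at h1
    rw [← hpdef, h] at h1
    simp at h1
  have hcont : Continuous fun x : ℝ => p.eval x := p.continuous
  -- existence of a root in each open interval, i ≠ j
  have hroot : ∀ i : Fin r, ∃ x, i ≠ j → x ∈ Set.Ioo (α i) (β i) ∧ p.eval x = 0 := by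
    intro i
    by_cases hij : i = j
    · exact ⟨0, fun h => absurd hij h⟩
    · suffices h : ∃ x ∈ Set.Ioo (α i) (β i), p.eval x = 0 by
        obtain ⟨x, hx1, hx2⟩ := h; exact ⟨x, fun _ => ⟨hx1, hx2⟩⟩
      by_contra hno
      push_neg at hno
      have hint : (∫ x in (α i)..(β i), p.eval x) = 0 := by
        have := hdual i j; rwa [if_neg hij, ← hpdef] at this
      by_cases hneg : ∃ u ∈ Set.Ioo (α i) (β i), p.eval u < 0
      · by_cases hpos : ∃ v ∈ Set.Ioo (α i) (β i), 0 < p.eval v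
        · obtain ⟨u, hu, hu0⟩ := hneg
          obtain ⟨v, hv, hv0⟩ := hpos
          rcases le_total u v with huv | huv
          · obtain ⟨w, hw, hw0⟩ := intermediate_value_Icc huv hcont.continuousOn
              (Set.mem_Icc.mpr ⟨hu0.le, hv0.le⟩)
            exact hno w ⟨lt_of_lt_of_le hu.1 hw.1, lt_of_le_of_lt hw.2 hv.2⟩ hw0
          · obtain ⟨w, hw, hw0⟩ := intermediate_value_Icc' huv hcont.continuousOn
              (Set.mem_Icc.mpr ⟨hu0.le, hv0.le⟩)
            exact hno w ⟨lt_of_lt_of_le hv.1 hw.1, lt_of_le_of_lt hw.2 hu.2⟩ hw0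
        · push_neg at hpos
          have hposall : ∀ x ∈ Set.Ioo (α i) (β i), 0 < -p.eval x := by
            intro x hx
            rcases lt_or_eq_of_le (hpos x hx) with h | h
            · linarith
            · exact absurd h (hno x hx)
          have := intervalIntegral_pos_of_pos_on
            (f := fun x => -p.eval x) (hcont.neg.intervalIntegrable _ _) hposall (hlen i)
          rw [intervalIntegral.integral_neg, hint] at this
          simp at this
      · push_neg at hneg
        have hposall : ∀ x ∈ Set.Ioo (α i) (β i), 0 < p.eval x := by
          intro x hx
          rcases lt_or_eq_of_le (hneg x hx) with h | h
          · exact h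
          · exact absurd h.symm (hno x hx)
        have := intervalIntegral_pos_of_pos_on
          (f := fun x => p.eval x) (hcont.intervalIntegrable _ _) hposall (hlen i)
        rw [hint] at this
        exact lt_irrefl _ this
  choose x hx using hroot
  -- separation: the chosen roots lie outside all other closed intervals
  have hsep : ∀ i i' : Fin r, i' ≠ j → i ≠ i' → ∀ y ∈ Set.Icc (α i) (β i), y ≠ x i' := by
    intro i i' hi'j hii' y hy hyx
    obtain ⟨hx1, _⟩ := hx i' hi'j
    rcases hii'.lt_or_gt with h | h
    · have h1 := horder i i' h
      have : y < y := lt_of_le_of_lt (le_trans hy.2 h1) (hyx ▸ hx1.1)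
      exact lt_irrefl _ this
    · have h1 := horder i' i h
      have : y < y := lt_of_lt_of_le (hyx ▸ hx1.2) (le_trans h1 hy.1)
      exact lt_irrefl _ this
  -- the image of the chosen roots
  set S : Finset (Fin r) := Finset.univ.erase j with hS
  set F : Finset ℝ := S.image x with hF
  have hinj : Set.InjOn x S := by
    intro a ha b hb hab
    by_contra hne
    have haj : a ≠ j := (Finset.mem_erase.mp ha).1
    have hbj : b ≠ j := (Finset.mem_erase.mp hb).1
    exact hsep a b hbj hne (x a) (Set.mem_Icc_of_Ioo (hx a haj).1) hab
  have hFcard : F.card = r - 1 := by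
    rw [hF, Finset.card_image_of_injOn hinj, hS, Finset.card_erase_of_mem (Finset.mem_univ j),
      Finset.card_univ, Fintype.card_fin]
  have hFsub : F ⊆ p.roots.toFinset := by
    intro y hy
    rw [hF] at hy
    obtain ⟨a, ha, rfl⟩ := Finset.mem_image.mp hy
    have haj : a ≠ j := (Finset.mem_erase.mp ha).1
    rw [Multiset.mem_toFinset, Polynomial.mem_roots hp0]
    exact (hx a haj).2
  have hcardle : p.roots.toFinset.card ≤ r - 1 := by
    have h1 : p.roots.toFinset.card ≤ p.roots.card := Multiset.toFinset_card_le _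
    have h2 : p.roots.card ≤ p.natDegree := Polynomial.card_roots' p
    have h3 : p.natDegree < r := (Polynomial.natDegree_lt_iff_degree_lt hp0).mpr (hdeg j)
    omega
  have hFeq : F = p.roots.toFinset :=
    Finset.eq_of_subset_of_card_le hFsub (hFcard ▸ hcardle)
  -- every root of p is one of the chosen roots
  have hallroots : ∀ y : ℝ, p.eval y = 0 → ∃ i : Fin r, i ≠ j ∧ y = x i := by
    intro y hy
    have : y ∈ p.roots.toFinset := by
      rw [Multiset.mem_toFinset, Polynomial.mem_roots hp0]; exact hy
    rw [← hFeq, hF] at this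
    obtain ⟨a, ha, rfl⟩ := Finset.mem_image.mp this
    exact ⟨a, (Finset.mem_erase.mp ha).1, rfl⟩
  constructor
  · intro i hij
    refine ⟨x i, ⟨Set.mem_Icc_of_Ioo (hx i hij).1, (hx i hij).2⟩, ?_⟩
    intro y ⟨hy1, hy2⟩
    obtain ⟨i', hi'j, rfl⟩ := hallroots y hy2
    by_contra hne
    have hii' : i ≠ i' := by rintro rfl; exact hne rfl
    exact hsep i i' hi'j hii' (x i') hy1 rfl
  · intro y hy
    obtain ⟨i, hij, rfl⟩ := hallroots y hy
    exact ⟨i, hij, Set.mem_Icc_of_Ioo (hx i hij).1⟩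
end

section
/- Under the same hypotheses, each segmental Lagrange basis polynomial ℓ̂_{s_j} is strictly positive on its own segment s_j. -/
/-!
Off its own segment, `ℓ̂_{s_j}` has zero integral over each of the other `r - 1` segments, so by the
mean value theorem for integrals it vanishes somewhere inside each of them. A further zero on `s_j`
would give `r` distinct roots (the segments only meet at endpoints) of a polynomial of degree `< r`,
forcing `ℓ̂_{s_j} = 0`, which contradicts `∫_{s_j} ℓ̂_{s_j} = 1`. Hence `ℓ̂_{s_j}` has no zero on
`s_j`, and since its mean over `s_j` is positive it is positive throughout.
-/

open Polynomial intervalIntegral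

lemma exists_mem_Ioo_eq_integral_div_sub {f : ℝ → ℝ} {a b : ℝ} (hf : ContinuousOn f (Set.Icc a b))
    (hab : a < b) : ∃ c ∈ Set.Ioo a b, f c = (∫ x in a..b, f x) / (b - a) := by
  rw [← interval_average_eq_div]
  have hf' : ContinuousOn f (Set.uIcc a b) := by rwa [Set.uIcc_of_le hab.le]
  simpa [Set.uIoo_of_le hab.le] using exists_eq_interval_average hab.ne hf'

lemma strictMono_of_mem_Icc_of_ne_mem_Ioo {ι : Type*} [LinearOrder ι] {α β g : ι → ℝ} (j : ι)
    (horder : ∀ i k, i < k → β i ≤ α k) (hIcc : ∀ i, g i ∈ Set.Icc (α i) (β i))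
    (hIoo : ∀ i ≠ j, g i ∈ Set.Ioo (α i) (β i)) : StrictMono g := by
  intro i k hik
  by_cases hk : k = j
  · have hi : i ≠ j := hk ▸ hik.ne
    calc g i < β i := (hIoo i hi).2
      _ ≤ α k := horder i k hik
      _ ≤ g k := (hIcc k).1
  · calc g i ≤ β i := (hIcc i).2
      _ ≤ α k := horder i k hik
      _ < g k := (hIoo k hk).1

theorem Polynomial.eq_zero_of_integral_eq_zero_of_isRoot {ι : Type*} [LinearOrder ι] [Fintype ι]
    {α β : ι → ℝ} (hlen : ∀ i, α i < β i) (horder : ∀ i k, i < k → β i ≤ α k) {p : ℝ[X]}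
    (hdeg : p.degree < Fintype.card ι) (j : ι)
    (hint : ∀ i ≠ j, (∫ x in (α i)..(β i), p.eval x) = 0)
    {z : ℝ} (hz : z ∈ Set.Icc (α j) (β j)) (hroot : p.IsRoot z) : p = 0 := by
  classical
  have hroots : ∀ i, ∃ y ∈ Set.Icc (α i) (β i), p.IsRoot y ∧ (i ≠ j → y ∈ Set.Ioo (α i) (β i)) := by
    intro i
    by_cases hij : i = j
    · exact ⟨z, hij ▸ hz, hroot, fun h => absurd hij h⟩
    · obtain ⟨y, hy, hpy⟩ := exists_mem_Ioo_eq_integral_div_sub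
        p.continuous.continuousOn (hlen i)
      rw [hint i hij, zero_div] at hpy
      exact ⟨y, Set.Ioo_subset_Icc_self hy, hpy, fun _ => hy⟩
  choose g hgIcc hgroot hgIoo using hroots
  have hg : StrictMono g := strictMono_of_mem_Icc_of_ne_mem_Ioo j horder hgIcc hgIoo
  exact eq_zero_of_degree_lt_of_eval_index_eq_zero Finset.univ hg.injective.injOn
    (by rwa [Finset.card_univ]) fun i _ => hgroot i

theorem stmt1_general (r : ℕ) (α β : Fin r → ℝ)
    (hlen : ∀ i, α i < β i)
    (horder : ∀ i j : Fin r, i < j → β i ≤ α j)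
    (ℓ : Fin r → Polynomial ℝ) (hdeg : ∀ j, (ℓ j).degree < (r : ℕ))
    (hdual : ∀ i j, (∫ x in (α i)..(β i), (ℓ j).eval x) = if i = j then 1 else 0) :
    ∀ j : Fin r, ∀ x ∈ Set.Icc (α j) (β j), 0 < (ℓ j).eval x := by
  intro j x hx
  by_contra! hx_nonpos
  have hcont : ContinuousOn (fun t => (ℓ j).eval t) (Set.Icc (α j) (β j)) :=
    (ℓ j).continuous.continuousOn
  obtain ⟨c, hc, hℓc⟩ := exists_mem_Ioo_eq_integral_div_sub hcont (hlen j)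
  have hℓc_pos : 0 < (ℓ j).eval c := by
    rw [hℓc, hdual j j, if_pos rfl]
    exact one_div_pos.mpr (sub_pos.mpr (hlen j))
  obtain ⟨z, hz, hℓz⟩ := isPreconnected_Icc.intermediate_value hx (Set.Ioo_subset_Icc_self hc)
    hcont ⟨hx_nonpos, hℓc_pos.le⟩
  have hℓ : ℓ j = 0 := eq_zero_of_integral_eq_zero_of_isRoot hlen horder
    (by rw [Fintype.card_fin]; exact hdeg j) j (fun i hi => by rw [hdual i j, if_neg hi]) hz hℓz
  simpa [hℓ] using hdual j j

/-- For a unisolvent set of segments in [-1,1], disjoint in measure,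
each segmental Lagrange basis polynomial is strictly positive on its own segment. -/
theorem stmt1 (r : ℕ) (hr : 0 < r) (α β : Fin r → ℝ)
    (hI : ∀ i, -1 ≤ α i ∧ β i ≤ 1) (hlen : ∀ i, α i < β i)
    (horder : ∀ i j : Fin r, i < j → β i ≤ α j)
    (huni : ∀ p : Polynomial ℝ, p.degree < (r : ℕ) →
      (∀ i, (∫ x in (α i)..(β i), p.eval x) = 0) → p = 0)
    (ℓ : Fin r → Polynomial ℝ) (hdeg : ∀ j, (ℓ j).degree < (r : ℕ))
    (hdual : ∀ i j, (∫ x in (α i)..(β i), (ℓ j).eval x) = if i = j then 1 else 0) :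
    ∀ j : Fin r, ∀ x ∈ Set.Icc (α j) (β j), 0 < (ℓ j).eval x :=
  stmt1_general r α β hlen horder ℓ hdeg hdual
end

section
/- If a set A of r supports in [-1,1] is regular — i.e., A splits into a set X of pairwise distinct nodes and a set S of segments overlapping at most in endpoints, with no node of X in the interior of any segment of S — then A is unisolvent for polynomials of degree r-1: any polynomial p of degree ≤ r-1 with p(ξ)=0 for all nodes ξ ∈ X and ∫_s p = 0 for all s ∈ S is the zero polynomial. -/
open Polynomial intervalIntegral

lemma integral_zero_root (p : Polynomial ℝ) {a b : ℝ} (hab : a < b)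
    (h : (∫ x in a..b, p.eval x) = 0) : ∃ c ∈ Set.Ioo a b, p.eval c = 0 := by
  have hc : Continuous fun x => p.eval x := p.continuous
  have := exists_hasDerivAt_eq_zero (f := fun x => ∫ t in a..x, p.eval t)
    (f' := fun x => p.eval x) hab
    (fun x _ => (intervalIntegral.continuous_primitive (fun _ _ => hc.intervalIntegrable _ _) a).continuousWithinAt)
    (by simp [h])
    (fun x _ => intervalIntegral.integral_hasDerivAt_right (hc.intervalIntegrable _ _)
      (hc.stronglyMeasurable.stronglyMeasurableAtFilter) hc.continuousAt)
  exact this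

/-- A regular set of supports (distinct nodes, segments overlapping at
most in endpoints, no node interior to a segment) is unisolvent for polynomials of
degree at most r-1, where r = m + n is the total number of supports. -/
theorem stmt2 (m n : ℕ) (ξ : Fin m → ℝ) (hξI : ∀ i, ξ i ∈ Set.Icc (-1 : ℝ) 1)
    (hξinj : Function.Injective ξ)
    (α β : Fin n → ℝ) (hseg : ∀ k, α k < β k)
    (hsegI : ∀ k, -1 ≤ α k ∧ β k ≤ 1)
    (hdisj : ∀ k l, k ≠ l → Set.Ioo (α k) (β k) ∩ Set.Ioo (α l) (β l) = ∅)
    (hnode : ∀ i k, ξ i ∉ Set.Ioo (α k) (β k)) :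
    ∀ p : Polynomial ℝ, p.degree < (m + n : ℕ) →
      (∀ i, p.eval (ξ i) = 0) →
      (∀ k, (∫ x in (α k)..(β k), p.eval x) = 0) → p = 0 := by
  intro p hdeg hroots hint
  by_contra hp
  -- choose a root in each segment interior
  choose ζ hζmem hζroot using fun k => integral_zero_root p (hseg k) (hint k)
  -- combined root function
  set f : Fin m ⊕ Fin n → ℝ := Sum.elim ξ ζ with hf
  have hfinj : Function.Injective f := by
    rintro (i | k) (j | l) h <;> simp only [hf, Sum.elim_inl, Sum.elim_inr] at h
    · exact congrArg Sum.inl (hξinj h)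
    · exact absurd (h.symm ▸ hζmem l) (hnode i l)
    · exact absurd (h ▸ hζmem k) (hnode j k)
    · by_contra hkl
      have hkl' : k ≠ l := fun e => hkl (congrArg Sum.inr e)
      have : ζ k ∈ Set.Ioo (α k) (β k) ∩ Set.Ioo (α l) (β l) :=
        ⟨hζmem k, h ▸ hζmem l⟩
      rw [hdisj k l hkl'] at this
      exact this
  have hfroot : ∀ s, p.eval (f s) = 0 := by
    rintro (i | k)
    · exact hroots i
    · exact hζroot k
  have hsub : ∀ s ∈ (Finset.univ : Finset (Fin m ⊕ Fin n)), f s ∈ p.roots.toFinset := by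
    intro s _
    simp [Multiset.mem_toFinset, Polynomial.mem_roots, hp, hfroot s]
  have hcard : (Finset.univ : Finset (Fin m ⊕ Fin n)).card ≤ p.roots.toFinset.card :=
    Finset.card_le_card_of_injOn f hsub hfinj.injOn
  have h1 : m + n ≤ p.roots.toFinset.card := by simpa using hcard
  have h2 : p.roots.toFinset.card ≤ p.natDegree :=
    (Multiset.toFinset_card_le _).trans (Polynomial.card_roots' p)
  have h3 : p.natDegree < m + n := by
    rwa [Polynomial.natDegree_lt_iff_degree_lt hp]
  omega
end

section
/- If a set of supports A^Fek = {a_1,...,a_r} maximizes the absolute value of the normalized Vandermonde determinant |det V(A)| over all admissible sets A of size r, then for every support a ⊆ I one has |(1/|a|)∫_a ℓ_{a_i}(x) dx| ≤ 1 for each i, and consequently the sup-norm of each normalized Lagrange basis function satisfies ‖ℓ_{a_i}‖_∞ = 1. -/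
open Polynomial intervalIntegral

/-- The normalized average of `f` over the support `[a,b]`: the mean value of `f`
if `a < b`, and the point evaluation `f a` if the support degenerates to a node. -/
noncomputable def avgSeg (a b : ℝ) (f : ℝ → ℝ) : ℝ :=
  if a < b then (b - a)⁻¹ * ∫ x in a..b, f x else f a

/-!
Writing `ℓ_j = ∑ₖ N k j • B k`, duality says `V(A) * N = 1`. Replacing the support `a_i` by an
arbitrary support `a` replaces row `i` of `V(A)` by the averages of the `B k` over `a`, and by
Cramer's rule the determinant of the new matrix is `det V(A)` times the average of `ℓ_i` over `a`.
Maximality of `|det V(A)|` therefore bounds that average by `1`. Point supports give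
`|ℓ_i| ≤ 1` on `[-1,1]`, and the average `1` of `ℓ_i` over `a_i` forces the supremum up to `1`.
-/

theorem Polynomial.span_range_eq_degreeLT {K : Type*} [Field K] {n : ℕ} {B : Fin n → K[X]}
    (hdeg : ∀ j, (B j).degree < n) (hli : LinearIndependent K B) :
    Submodule.span K (Set.range B) = degreeLT K n := by
  have : FiniteDimensional K (degreeLT K n) := (degreeLTEquiv K n).symm.finiteDimensional
  refine Submodule.eq_of_le_of_finrank_eq
    (Submodule.span_le.mpr (Set.range_subset_iff.mpr fun j => mem_degreeLT.mpr (hdeg j))) ?_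
  rw [finrank_span_eq_card hli, (degreeLTEquiv K n).finrank_eq, Module.finrank_fin_fun,
    Fintype.card_fin]

namespace Matrix

variable {n R : Type*} [Fintype n] [DecidableEq n]

theorem det_one_updateRow [CommRing R] (i : n) (v : n → R) :
    ((1 : Matrix n n R).updateRow i v).det = v i := by
  rw [← cramer_transpose_apply, transpose_one, cramer_one]
  rfl

theorem det_updateRow_mul_det_of_mul_eq_one [CommRing R] {M N : Matrix n n R} (h : M * N = 1)
    (i : n) (v : n → R) : (M.updateRow i v).det * N.det = (v ᵥ* N) i := by
  rw [← det_mul, updateRow_mul, h, det_one_updateRow]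

theorem abs_vecMul_apply_le_one [CommRing R] [LinearOrder R] [IsStrictOrderedRing R]
    {M N : Matrix n n R} (h : M * N = 1) {i : n} {v : n → R}
    (hdet : |(M.updateRow i v).det| ≤ |M.det|) : |(v ᵥ* N) i| ≤ 1 :=
  calc |(v ᵥ* N) i| = |(M.updateRow i v).det| * |N.det| := by
        rw [← det_updateRow_mul_det_of_mul_eq_one h, abs_mul]
    _ ≤ |M.det| * |N.det| := by gcongr
    _ = 1 := by rw [← abs_mul, ← det_mul, h, det_one, abs_one]

end Matrix

open Matrix

section avgSeg

variable {a b : ℝ} {f : ℝ → ℝ}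

theorem avgSeg_self : avgSeg a a f = f a := by
  simp [avgSeg]

theorem avgSeg_finset_sum_mul {ι : Type*} (s : Finset ι) (c : ι → ℝ) {g : ι → ℝ → ℝ}
    (hg : ∀ k ∈ s, IntervalIntegrable (g k) MeasureTheory.volume a b) :
    avgSeg a b (fun x => ∑ k ∈ s, c k * g k x) = ∑ k ∈ s, c k * avgSeg a b (g k) := by
  unfold avgSeg
  split_ifs
  · rw [integral_finsetSum fun k hk => (hg k hk).const_mul (c k), Finset.mul_sum]
    refine Finset.sum_congr rfl fun k _ => ?_
    rw [integral_const_mul]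
    ring
  · rfl

theorem avgSeg_le_of_forall_le {c : ℝ} (hab : a ≤ b)
    (hf : IntervalIntegrable f MeasureTheory.volume a b) (h : ∀ x ∈ Set.Icc a b, f x ≤ c) :
    avgSeg a b f ≤ c := by
  unfold avgSeg
  split_ifs with hlt
  · have hint : ∫ x in a..b, f x ≤ (b - a) * c := by
      simpa using integral_mono_on hab hf intervalIntegrable_const h
    rw [inv_mul_le_iff₀ (sub_pos.mpr hlt)]
    exact hint
  · exact h a ⟨le_rfl, hab⟩

theorem sSup_image_abs_eq_one_of_avgSeg_eq_one {s : Set ℝ} (hle : ∀ x ∈ s, |f x| ≤ 1)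
    (hab : a ≤ b) (hsub : Set.Icc a b ⊆ s) (hf : IntervalIntegrable f MeasureTheory.volume a b)
    (h1 : avgSeg a b f = 1) : sSup ((fun x => |f x|) '' s) = 1 := by
  have hbdd : BddAbove ((fun x => |f x|) '' s) := ⟨1, Set.forall_mem_image.mpr hle⟩
  refine le_antisymm (csSup_le ((Set.nonempty_Icc.mpr hab).mono hsub |>.image _)
    (Set.forall_mem_image.mpr hle)) ?_
  rw [← h1]
  exact avgSeg_le_of_forall_le hab hf fun x hx =>
    (le_abs_self _).trans (le_csSup hbdd ⟨x, hsub hx, rfl⟩)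

end avgSeg

/-- The matrix `V(A)` for the supports `A = {[α i, β i]}`. -/
noncomputable def normalizedVandermonde {m n : Type*} (α β : m → ℝ) (B : n → ℝ[X]) :
    Matrix m n ℝ :=
  Matrix.of fun i j => avgSeg (α i) (β i) fun x => (B j).eval x

theorem normalizedVandermonde_update {m n : Type*} [DecidableEq m] (α β : m → ℝ)
    (B : n → ℝ[X]) (i : m) (a b : ℝ) :
    normalizedVandermonde (Function.update α i a) (Function.update β i b) B =
      (normalizedVandermonde α β B).updateRow i fun j => avgSeg a b fun x => (B j).eval x := by
  ext p j
  rcases eq_or_ne p i with rfl | hp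
  · simp [normalizedVandermonde]
  · simp [normalizedVandermonde, hp]

theorem avgSeg_eval_sum_smul {n : Type*} [Fintype n] (a b : ℝ) (c : n → ℝ) (B : n → ℝ[X]) :
    (avgSeg a b fun x => (∑ k, c k • B k).eval x) =
      (fun k => avgSeg a b fun x => (B k).eval x) ⬝ᵥ c := by
  simp only [eval_finsetSum, eval_smul, smul_eq_mul, dotProduct]
  rw [avgSeg_finset_sum_mul _ _ fun k _ => (B k).continuous.intervalIntegrable a b]
  simp only [mul_comm]

theorem stmt6_general (r : ℕ) (B : Fin r → Polynomial ℝ)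
    (hBdeg : ∀ j, (B j).degree < (r : ℕ)) (hBli : LinearIndependent ℝ B)
    (α β : Fin r → ℝ) (hab : ∀ i, α i ≤ β i) (hI : ∀ i, -1 ≤ α i ∧ β i ≤ 1)
    (hmax : ∀ α' β' : Fin r → ℝ, (∀ i, -1 ≤ α' i ∧ α' i ≤ β' i ∧ β' i ≤ 1) →
      |(Matrix.of fun i j : Fin r =>
          avgSeg (α' i) (β' i) fun x => (B j).eval x).det| ≤
        |(Matrix.of fun i j : Fin r =>
          avgSeg (α i) (β i) fun x => (B j).eval x).det|)
    (ℓ : Fin r → Polynomial ℝ) (hdeg : ∀ i, (ℓ i).degree < (r : ℕ))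
    (hdual : ∀ i j, avgSeg (α i) (β i) (fun x => (ℓ j).eval x) = if i = j then 1 else 0) :
    (∀ i, ∀ a b : ℝ, -1 ≤ a → a ≤ b → b ≤ 1 →
      |avgSeg a b fun x => (ℓ i).eval x| ≤ 1) ∧
    (∀ i, sSup ((fun x => |(ℓ i).eval x|) '' Set.Icc (-1 : ℝ) 1) = 1) := by
  obtain ⟨N, hN⟩ : ∃ N : Matrix (Fin r) (Fin r) ℝ, ∀ j, ℓ j = ∑ k, N k j • B k := by
    have hspan := span_range_eq_degreeLT hBdeg hBli
    choose c hc using fun j => (Submodule.mem_span_range_iff_exists_fun ℝ).mp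
      (hspan ▸ mem_degreeLT.mpr (hdeg j))
    exact ⟨Matrix.of fun k j => c j k, fun j => (hc j).symm⟩
  have havg : ∀ a b j, (avgSeg a b fun x => (ℓ j).eval x) =
      ((fun k => avgSeg a b fun x => (B k).eval x) ᵥ* N) j := fun a b j => by
    rw [hN j, avgSeg_eval_sum_smul]; rfl
  have hVN : normalizedVandermonde α β B * N = 1 := by
    ext i j
    rw [Matrix.mul_apply, Matrix.one_apply, ← hdual, havg]
    rfl
  have hbound : ∀ i a b, -1 ≤ a → a ≤ b → b ≤ 1 → |avgSeg a b fun x => (ℓ i).eval x| ≤ 1 := by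
    intro i a b ha hab' hb
    rw [havg]
    refine Matrix.abs_vecMul_apply_le_one hVN ?_
    rw [← normalizedVandermonde_update]
    refine hmax _ _ fun p => ?_
    rcases eq_or_ne p i with rfl | hp
    · simp [ha, hab', hb]
    · simp [hp, hab p, hI p]
  refine ⟨hbound, fun i => sSup_image_abs_eq_one_of_avgSeg_eq_one
    (fun x hx => by simpa [avgSeg_self] using hbound i x x hx.1 le_rfl hx.2) (hab i)
    (Set.Icc_subset_Icc (hI i).1 (hI i).2) ((ℓ i).continuous.intervalIntegrable _ _) ?_⟩
  simpa using hdual i i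

/-- If a set of r supports in [-1,1] maximizes the absolute value of the
normalized Vandermonde determinant among all admissible sets of r supports, then all
normalized averages of the Lagrange basis functions over arbitrary supports are
bounded by 1, and the sup-norm of each Lagrange basis function equals 1. -/
theorem stmt6 (r : ℕ) (hr : 0 < r) (B : Fin r → Polynomial ℝ)
    (hBdeg : ∀ j, (B j).degree < (r : ℕ)) (hBli : LinearIndependent ℝ B)
    (α β : Fin r → ℝ) (hab : ∀ i, α i ≤ β i) (hI : ∀ i, -1 ≤ α i ∧ β i ≤ 1)
    (hmax : ∀ α' β' : Fin r → ℝ, (∀ i, -1 ≤ α' i ∧ α' i ≤ β' i ∧ β' i ≤ 1) →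
      |(Matrix.of fun i j : Fin r =>
          avgSeg (α' i) (β' i) fun x => (B j).eval x).det| ≤
        |(Matrix.of fun i j : Fin r =>
          avgSeg (α i) (β i) fun x => (B j).eval x).det|)
    (ℓ : Fin r → Polynomial ℝ) (hdeg : ∀ i, (ℓ i).degree < (r : ℕ))
    (hdual : ∀ i j, avgSeg (α i) (β i) (fun x => (ℓ j).eval x) = if i = j then 1 else 0) :
    (∀ i, ∀ a b : ℝ, -1 ≤ a → a ≤ b → b ≤ 1 →
      |avgSeg a b fun x => (ℓ i).eval x| ≤ 1) ∧
    (∀ i, sSup ((fun x => |(ℓ i).eval x|) '' Set.Icc (-1 : ℝ) 1) = 1) :=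
  stmt6_general r B hBdeg hBli α β hab hI hmax ℓ hdeg hdual
end

section
/- If a set of segments Ŝ^Fek = {s_1,...,s_r} maximizes the absolute value of the non-normalized Vandermonde determinant |det V̂(S)|, with V̂_{ij} = ∫_{s_i} B_j, over all sets S of r segments in I, then |∫_s ℓ̂_{s_i}(x) dx| ≤ 1 for every segment s ⊆ I and every i ∈ {1,...,r}. -/
open Polynomial intervalIntegral

/-- If a set of r segments in I = [-1,1] maximizes the absolute value of
the non-normalized Vandermonde determinant (with entries ∫_{s_i} B_j) among all sets
of r segments in I, then the integral of each Lagrange basis function over any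
segment s ⊆ I is bounded by 1 in absolute value. -/
theorem stmt7 (r : ℕ) (hr : 0 < r) (B : Fin r → Polynomial ℝ)
    (hBdeg : ∀ j, (B j).degree < (r : ℕ)) (hBli : LinearIndependent ℝ B)
    (α β : Fin r → ℝ) (hab : ∀ i, α i ≤ β i) (hI : ∀ i, -1 ≤ α i ∧ β i ≤ 1)
    (hmax : ∀ α' β' : Fin r → ℝ, (∀ i, -1 ≤ α' i ∧ α' i ≤ β' i ∧ β' i ≤ 1) →
      |(Matrix.of fun i j : Fin r =>
          ∫ x in (α' i)..(β' i), (B j).eval x).det| ≤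
        |(Matrix.of fun i j : Fin r =>
          ∫ x in (α i)..(β i), (B j).eval x).det|)
    (ℓ : Fin r → Polynomial ℝ) (hdeg : ∀ i, (ℓ i).degree < (r : ℕ))
    (hdual : ∀ i j, (∫ x in (α i)..(β i), (ℓ j).eval x) = if i = j then 1 else 0) :
    ∀ i, ∀ a b : ℝ, -1 ≤ a → a ≤ b → b ≤ 1 →
      |∫ x in a..b, (ℓ i).eval x| ≤ 1 := by
  have : Nonempty (Fin r) := ⟨⟨0, hr⟩⟩
  -- The family B, viewed inside degreeLT ℝ r, is a basis
  set V := Polynomial.degreeLT ℝ r with hV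
  have hfin : Module.finrank ℝ V = r := by
    rw [(Polynomial.degreeLTEquiv ℝ r).finrank_eq]
    simp
  set B' : Fin r → V := fun j => ⟨B j, Polynomial.mem_degreeLT.2 (hBdeg j)⟩ with hB'
  have hB'li : LinearIndependent ℝ B' := by
    apply LinearIndependent.of_comp V.subtype
    exact hBli
  have hcard : Fintype.card (Fin r) = Module.finrank ℝ V := by simp [hfin]
  set bB := basisOfLinearIndependentOfCardEqFinrank hB'li hcard with hbB
  have hbBcoe : ∀ k, (bB k : Polynomial ℝ) = B k := by
    intro k
    rw [hbB, coe_basisOfLinearIndependentOfCardEqFinrank]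
  -- coefficients of ℓ in basis B
  set c : Fin r → Fin r → ℝ := fun i k => bB.repr ⟨ℓ i, Polynomial.mem_degreeLT.2 (hdeg i)⟩ k
    with hc
  have hℓsum : ∀ i, ℓ i = ∑ k, c i k • B k := by
    intro i
    have h1 := bB.sum_repr ⟨ℓ i, Polynomial.mem_degreeLT.2 (hdeg i)⟩
    have h2 : ℓ i = ((∑ k, (bB.repr ⟨ℓ i, Polynomial.mem_degreeLT.2 (hdeg i)⟩) k • bB k
        : V) : Polynomial ℝ) := congrArg Subtype.val h1.symm
    rw [h2]
    push_cast
    exact Finset.sum_congr rfl fun k _ => by rw [hbBcoe]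
  -- integral of ℓ i over any interval in terms of integrals of B
  have hint : ∀ i (a b : ℝ), (∫ x in a..b, (ℓ i).eval x)
      = ∑ k, c i k * ∫ x in a..b, (B k).eval x := by
    intro i a b
    rw [hℓsum i]
    have : ∀ x : ℝ, (∑ k, c i k • B k).eval x = ∑ k, c i k * (B k).eval x := by
      intro x; rw [Polynomial.eval_finset_sum]; simp [Polynomial.smul_eq_C_mul]
    simp_rw [this]
    rw [intervalIntegral.integral_finset_sum]
    · exact Finset.sum_congr rfl fun k _ => by
        rw [intervalIntegral.integral_const_mul]
    · intro k _
      exact ((Polynomial.continuous (B k)).const_smul (c i k)).intervalIntegrable a b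
  set M : Matrix (Fin r) (Fin r) ℝ :=
    Matrix.of fun i j : Fin r => ∫ x in (α i)..(β i), (B j).eval x with hM
  set N : Matrix (Fin r) (Fin r) ℝ := Matrix.of fun k j : Fin r => c j k with hN
  have hMN : M * N = 1 := by
    ext i j
    rw [Matrix.mul_apply]
    have := hdual i j
    rw [hint j (α i) (β i)] at this
    simp only [hM, hN, Matrix.of_apply, Matrix.one_apply]
    rw [← this]
    exact Finset.sum_congr rfl fun k _ => by ring
  have hNM : N * M = 1 := mul_eq_one_comm.mp hMN
  have hdetM : M.det ≠ 0 := by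
    intro h
    have := congrArg Matrix.det hMN
    rw [Matrix.det_mul, h, Matrix.det_one] at this
    simp at this
  intro i a b ha hab' hb
  -- the replaced matrix
  set w : Fin r → ℝ := fun k => ∫ x in a..b, (B k).eval x with hw
  set v : Fin r → ℝ := fun k => ∫ x in a..b, (ℓ k).eval x with hv
  have hvw : v = Matrix.vecMul w N := by
    funext k
    show (∫ x in a..b, (ℓ k).eval x) = dotProduct w fun i' => N i' k
    rw [hint k a b, dotProduct]
    exact Finset.sum_congr rfl fun k' _ => by
      simp only [hN, Matrix.of_apply, hw]; ring
  have hwv : Matrix.vecMul v M = w := by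
    rw [hvw, Matrix.vecMul_vecMul, hNM, Matrix.vecMul_one]
  have hwsum : w = ∑ k, v k • M k := by
    rw [← hwv]
    funext j
    rw [Matrix.vecMul, dotProduct]
    simp [Finset.sum_apply]
  -- determinant of the updated matrix
  have hdet' : (M.updateRow i w).det = v i * M.det := by
    rw [hwsum, Matrix.det_updateRow_sum]
    simp
  -- apply maximality with the modified segments
  set α' : Fin r → ℝ := Function.update α i a with hα'
  set β' : Fin r → ℝ := Function.update β i b with hβ'
  have hok : ∀ i', -1 ≤ α' i' ∧ α' i' ≤ β' i' ∧ β' i' ≤ 1 := by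
    intro i'
    by_cases h : i' = i
    · subst h; simp [hα', hβ', ha, hab', hb]
    · simp [hα', hβ', Function.update_of_ne h, hab i', (hI i').1, (hI i').2]
  have hmat : (Matrix.of fun i' j : Fin r => ∫ x in (α' i')..(β' i'), (B j).eval x)
      = M.updateRow i w := by
    ext i' j
    by_cases h : i' = i
    · subst h; simp [hα', hβ', hw]
    · simp [hα', hβ', Function.update_of_ne h, hM, Matrix.updateRow_ne h]
  have hle := hmax α' β' hok
  rw [hmat, hdet'] at hle
  rw [abs_mul] at hle
  have hMpos : 0 < |M.det| := abs_pos.2 hdetM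
  have : |v i| ≤ 1 := by
    by_contra hgt
    push_neg at hgt
    have : |M.det| < |v i| * |M.det| := by
      calc |M.det| = 1 * |M.det| := (one_mul _).symm
      _ < |v i| * |M.det| := by exact mul_lt_mul_of_pos_right hgt hMpos
    linarith
  exact this
end

section
/- For pairwise distinct real numbers ξ_1 < ξ_2 < ... < ξ_{r+1}, the determinant of the r×r matrix with entries V̂_{ij} = ∫_{ξ_i}^{ξ_{i+1}} x^{j-1} dx = (ξ_{i+1}^j − ξ_i^j)/j equals (1/r!) · ∏_{1 ≤ i < j ≤ r+1} (ξ_j − ξ_i). -/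
open Polynomial intervalIntegral Matrix Finset

/-- For ξ_1 < ... < ξ_{r+1}, the determinant of the r×r matrix with
entries ∫_{ξ_i}^{ξ_{i+1}} x^{j-1} dx equals (1/r!)·∏_{i<j} (ξ_j - ξ_i). -/
theorem stmt10 (r : ℕ) (hr : 0 < r) (ξ : Fin (r + 1) → ℝ) (hmono : StrictMono ξ) :
    (Matrix.of fun i j : Fin r =>
        ∫ x in (ξ i.castSucc)..(ξ i.succ), x ^ (j : ℕ)).det =
      ((r.factorial : ℝ))⁻¹ * ∏ i : Fin (r + 1), ∏ j ∈ Finset.Ioi i, (ξ j - ξ i) := by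
  -- B : the Vandermonde matrix after row-difference operations
  set B : Matrix (Fin (r + 1)) (Fin (r + 1)) ℝ :=
    Matrix.of (Fin.cases (fun j => ξ 0 ^ (j : ℕ))
      (fun i j => ξ i.succ ^ (j : ℕ) - ξ i.castSucc ^ (j : ℕ))) with hB
  have h1 : (Matrix.vandermonde ξ).det = B.det := by
    apply Matrix.det_eq_of_forall_row_eq_smul_add_pred (fun _ => (1 : ℝ))
    · intro j; simp [hB, Matrix.vandermonde]
    · intro i j; simp [hB, Matrix.vandermonde]
  have h2 : B.det = (B.submatrix Fin.succ Fin.succ).det := by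
    rw [Matrix.det_succ_column_zero]
    rw [Fin.sum_univ_succ]
    have hz : ∀ i : Fin r, B i.succ 0 = 0 := by intro i; simp [hB]
    simp only [hz, mul_zero, zero_mul, Finset.sum_const_zero, add_zero]
    simp [hB, Fin.succAbove_zero]
  have h3 : ∀ i j : Fin r, (∫ x in (ξ i.castSucc)..(ξ i.succ), x ^ (j : ℕ))
      = ((j : ℝ) + 1)⁻¹ * (B.submatrix Fin.succ Fin.succ) i j := by
    intro i j
    rw [integral_pow]
    simp only [Matrix.submatrix_apply, hB, Matrix.of_apply, Fin.cases_succ, Fin.val_succ]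
    push_cast
    ring
  have h4 : (Matrix.of fun i j : Fin r =>
        ∫ x in (ξ i.castSucc)..(ξ i.succ), x ^ (j : ℕ)).det
      = Matrix.det (Matrix.of fun i j : Fin r =>
          ((j : ℝ) + 1)⁻¹ * (B.submatrix Fin.succ Fin.succ) i j) := by
    congr 1; ext i j; exact h3 i j
  rw [h4, Matrix.det_mul_row, ← h2, ← h1, Matrix.det_vandermonde]
  congr 1
  have : ∏ i : Fin r, ((i : ℝ) + 1) = (r.factorial : ℝ) := by
    rw [Fin.prod_univ_eq_prod_range (fun i => ((i : ℝ) + 1)) r,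
      ← Finset.prod_range_add_one_eq_factorial]
    push_cast
    rfl
  rw [← this]
  exact Finset.prod_inv_distrib (f := fun i : Fin r => ((i : ℝ) + 1))
end

section
/- For real numbers ξ_1 < ξ_2 < ... < ξ_{r+1}, the determinant of the r×r matrix with entries V_{ij} = (1/(ξ_{i+1}−ξ_i)) ∫_{ξ_i}^{ξ_{i+1}} x^{j-1} dx equals (1/r!) · ∏_{1 ≤ i, with i+1 < j ≤ r+1} (ξ_j − ξ_i), i.e., the full Vandermonde-type product over all pairs i<j omitting the consecutive factors (ξ_{i+1} − ξ_i). -/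
/-!
Since `∫_{ξ_i}^{ξ_{i+1}} x^j dx = (ξ_{i+1}^{j+1} - ξ_i^{j+1}) / (j+1)`, the matrix is obtained
from `A i j = ξ_{i+1}^{j+1} - ξ_i^{j+1}` by scaling row `i` by `(ξ_{i+1} - ξ_i)⁻¹` and column `j`
by `(j+1)⁻¹`; the column factors multiply to `1/r!`. Subtracting from each row of the
`(r+1)×(r+1)` Vandermonde matrix the row before it leaves first column `(1, 0, …, 0)` and
complementary minor `A`, so `det A` is the full Vandermonde product, and the row factors cancel
exactly its consecutive factors `ξ_{i+1} - ξ_i`.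
-/

namespace Matrix

theorem det_of_sub_pow_succ_eq_det_vandermonde {R : Type*} [CommRing R] {r : ℕ}
    (ξ : Fin (r + 1) → R) :
    (of fun i j : Fin r => ξ i.succ ^ ((j : ℕ) + 1) - ξ i.castSucc ^ ((j : ℕ) + 1)).det =
      (vandermonde ξ).det := by
  set B : Matrix (Fin (r + 1)) (Fin (r + 1)) R := of fun i j =>
    Fin.cases (ξ 0 ^ (j : ℕ)) (fun i => ξ i.succ ^ (j : ℕ) - ξ i.castSucc ^ (j : ℕ)) i
  have hrows : (vandermonde ξ).det = B.det :=
    det_eq_of_forall_row_eq_smul_add_pred (fun _ => 1) (fun j => by simp [B])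
      (fun i j => by simp [B])
  rw [hrows, det_succ_column_zero, Fin.sum_univ_succ]
  simp [B, submatrix, Fin.val_succ]

end Matrix

theorem Fin.prod_prod_filter_Ioi_not_lt_eq_prod_succ {M : Type*} [CommMonoid M] {r : ℕ}
    (f : Fin (r + 1) → Fin (r + 1) → M) :
    ∏ i : Fin (r + 1), ∏ j ∈ (Finset.Ioi i).filter (fun j : Fin (r + 1) => ¬ (i : ℕ) + 1 < j),
      f i j = ∏ i : Fin r, f i.castSucc i.succ := by
  have hlast : (Finset.Ioi (Fin.last r)).filter
      (fun j : Fin (r + 1) => ¬ (Fin.last r : ℕ) + 1 < j) = ∅ := by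
    simp [Finset.Ioi_eq_empty.2 fun j _ => Fin.le_last j]
  have hsucc (i : Fin r) : (Finset.Ioi i.castSucc).filter
      (fun j : Fin (r + 1) => ¬ (i.castSucc : ℕ) + 1 < j) = {i.succ} := by
    ext j
    simp only [Finset.mem_filter, Finset.mem_Ioi, Finset.mem_singleton, Fin.lt_def,
      Fin.val_castSucc, Fin.ext_iff, Fin.val_succ, not_lt]
    omega
  rw [Fin.prod_univ_castSucc, hlast]
  simp only [hsucc, Finset.prod_singleton, Finset.prod_empty, mul_one]

theorem Fin.prod_prod_Ioi_eq_prod_filter_mul_prod_succ {M : Type*} [CommMonoid M] {r : ℕ}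
    (f : Fin (r + 1) → Fin (r + 1) → M) :
    ∏ i : Fin (r + 1), ∏ j ∈ Finset.Ioi i, f i j =
      (∏ i : Fin (r + 1), ∏ j ∈ (Finset.Ioi i).filter (fun j : Fin (r + 1) => (i : ℕ) + 1 < j),
        f i j) * ∏ i : Fin r, f i.castSucc i.succ := by
  rw [← Fin.prod_prod_filter_Ioi_not_lt_eq_prod_succ, ← Finset.prod_mul_distrib]
  exact Finset.prod_congr rfl fun i _ => (Finset.prod_filter_mul_prod_filter_not _ _ _).symm

theorem Fin.prod_univ_natCast_add_one {R : Type*} [CommSemiring R] (r : ℕ) :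
    ∏ j : Fin r, (((j : ℕ) : R) + 1) = r.factorial := by
  rw [Fin.prod_univ_eq_prod_range (fun j => (j : R) + 1),
    ← Finset.prod_range_add_one_eq_factorial]
  push_cast
  rfl

theorem stmt11_general (r : ℕ) (ξ : Fin (r + 1) → ℝ) (hmono : StrictMono ξ) :
    (Matrix.of fun i j : Fin r =>
        (ξ i.succ - ξ i.castSucc)⁻¹ * ∫ x in (ξ i.castSucc)..(ξ i.succ), x ^ (j : ℕ)).det =
      ((r.factorial : ℝ))⁻¹ *
        ∏ i : Fin (r + 1),
          ∏ j ∈ (Finset.Ioi i).filter (fun j : Fin (r + 1) => (i : ℕ) + 1 < (j : ℕ)), (ξ j - ξ i) := by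
  have hgap : ∏ i : Fin r, (ξ i.succ - ξ i.castSucc) ≠ 0 :=
    Finset.prod_ne_zero_iff.2 fun i _ => sub_ne_zero.2 (hmono i.castSucc_lt_succ).ne'
  set A : Matrix (Fin r) (Fin r) ℝ :=
    Matrix.of fun i j => ξ i.succ ^ ((j : ℕ) + 1) - ξ i.castSucc ^ ((j : ℕ) + 1) with hA
  have hscale : (Matrix.of fun i j : Fin r =>
        (ξ i.succ - ξ i.castSucc)⁻¹ * ∫ x in (ξ i.castSucc)..(ξ i.succ), x ^ (j : ℕ)) =
      Matrix.of fun i j => (ξ i.succ - ξ i.castSucc)⁻¹ *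
        Matrix.of (fun i (j : Fin r) => (((j : ℕ) : ℝ) + 1)⁻¹ * A i j) i j := by
    ext i j
    simp only [Matrix.of_apply, integral_pow, hA]
    ring
  rw [hscale, Matrix.det_mul_column, Matrix.det_mul_row,
    hA, Matrix.det_of_sub_pow_succ_eq_det_vandermonde, Matrix.det_vandermonde,
    Fin.prod_prod_Ioi_eq_prod_filter_mul_prod_succ, Finset.prod_inv_distrib,
    Finset.prod_inv_distrib, Fin.prod_univ_natCast_add_one]
  field_simp

/-- For ξ_1 < ... < ξ_{r+1}, the determinant of the r×r matrix of
averages of the monomials over the concatenated segments [ξ_i, ξ_{i+1}] equals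
(1/r!) times the Vandermonde-type product over all pairs i < j with j > i+1. -/
theorem stmt11 (r : ℕ) (hr : 0 < r) (ξ : Fin (r + 1) → ℝ) (hmono : StrictMono ξ) :
    (Matrix.of fun i j : Fin r =>
        (ξ i.succ - ξ i.castSucc)⁻¹ * ∫ x in (ξ i.castSucc)..(ξ i.succ), x ^ (j : ℕ)).det =
      ((r.factorial : ℝ))⁻¹ *
        ∏ i : Fin (r + 1),
          ∏ j ∈ (Finset.Ioi i).filter (fun j : Fin (r + 1) => (i : ℕ) + 1 < (j : ℕ)), (ξ j - ξ i) :=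
  stmt11_general r ξ hmono
end

section
/- For r = 4, the maximum of F(ξ_1,...,ξ_5) = ∏_{j > i+1} (ξ_j − ξ_i) over −1 ≤ ξ_1 ≤ ... ≤ ξ_5 ≤ 1 is attained exactly at ξ_1 = ξ_2 = −1, ξ_3 = 0, ξ_4 = ξ_5 = 1. -/
/-!
Write `a ≤ b ≤ c ≤ d ≤ e` for the five points. The product splits as
`(c - a) (e - c) · (d - a) (e - b) · (e - a) (d - b)`. Each of the last four factors lies in
`[0, 2]`, and `(c - a) (e - c) ≤ (c + 1) (1 - c) = 1 - c² ≤ 1`, so the product is at most `16`.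
Equality forces `d - a = e - b = 2`, i.e. `a = b = -1` and `d = e = 1`, and then `1 - c² = 1`.
-/

theorem eq_and_eq_of_mul_le_mul_of_le {α : Type*} [Semiring α] [LinearOrder α]
    [IsStrictOrderedRing α] {x y X Y : α} (hxX : x ≤ X) (hyY : y ≤ Y) (hx : 0 ≤ x)
    (hX : 0 < X) (hY : 0 < Y) (h : X * Y ≤ x * y) : x = X ∧ y = Y := by
  have hle : x * y ≤ X * Y :=
    (mul_le_mul_of_nonneg_left hyY hx).trans (mul_le_mul_of_nonneg_right hxX hY.le)
  have hx_pos : 0 < x := hx.lt_of_ne fun hx0 => by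
    simpa [← hx0] using (mul_pos hX hY).trans_le h
  exact (mul_eq_mul_iff_eq_and_eq_of_pos hxX hyY hx_pos hY).1 (le_antisymm hle h)

theorem prod_sub_nonadjacent_fin_five {R : Type*} [CommRing R] (f : Fin 5 → R) :
    ∏ i : Fin 5, ∏ j ∈ (Finset.Ioi i).filter (fun j : Fin 5 => (i : ℕ) + 1 < (j : ℕ)),
        (f j - f i) =
      (f 2 - f 0) * (f 4 - f 2) * ((f 3 - f 0) * (f 4 - f 1) * ((f 4 - f 0) * (f 3 - f 1))) := by
  rw [Fin.prod_univ_five]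
  rw [show (Finset.Ioi (0 : Fin 5)).filter (fun j : Fin 5 => (0 : Fin 5).val + 1 < j.val)
      = {2, 3, 4} by decide,
    show (Finset.Ioi (1 : Fin 5)).filter (fun j : Fin 5 => (1 : Fin 5).val + 1 < j.val)
      = {3, 4} by decide,
    show (Finset.Ioi (2 : Fin 5)).filter (fun j : Fin 5 => (2 : Fin 5).val + 1 < j.val)
      = {4} by decide,
    show (Finset.Ioi (3 : Fin 5)).filter (fun j : Fin 5 => (3 : Fin 5).val + 1 < j.val)
      = ∅ by decide,
    show (Finset.Ioi (4 : Fin 5)).filter (fun j : Fin 5 => (4 : Fin 5).val + 1 < j.val)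
      = ∅ by decide]
  rw [Finset.prod_insert (by decide), Finset.prod_insert (by decide), Finset.prod_insert (by decide)]
  simp only [Finset.prod_singleton, Finset.prod_empty]
  ring

theorem sub_mul_sub_le_one {a c e : ℝ} (ha : -1 ≤ a) (hac : a ≤ c) (hce : c ≤ e) (he : e ≤ 1) :
    (c - a) * (e - c) ≤ 1 :=
  calc (c - a) * (e - c) ≤ (c + 1) * (1 - c) := by gcongr <;> linarith
    _ = 1 - c ^ 2 := by ring
    _ ≤ 1 := by nlinarith [sq_nonneg c]

theorem sub_mul_sub_le_four {a b d e : ℝ} (ha : -1 ≤ a) (hd : d ≤ 1) (hb : -1 ≤ b)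
    (hbe : b ≤ e) (he : e ≤ 1) : (d - a) * (e - b) ≤ 4 :=
  calc (d - a) * (e - b) ≤ 2 * 2 := mul_le_mul (by linarith) (by linarith) (by linarith) zero_le_two
    _ = 4 := by norm_num

section FivePoints

variable {a b c d e : ℝ} (h₀ : -1 ≤ a) (hab : a ≤ b) (hbc : b ≤ c) (hcd : c ≤ d) (hde : d ≤ e)
  (h₁ : e ≤ 1)
include h₀ hab hbc hcd hde h₁

theorem nonadjacent_factor_bounds :
    (0 ≤ (c - a) * (e - c) ∧ (c - a) * (e - c) ≤ 1) ∧
    (0 ≤ (d - a) * (e - b) ∧ (d - a) * (e - b) ≤ 4) ∧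
    (0 ≤ (e - a) * (d - b) ∧ (e - a) * (d - b) ≤ 4) := by
  refine ⟨⟨mul_nonneg ?_ ?_, sub_mul_sub_le_one ?_ ?_ ?_ ?_⟩,
    ⟨mul_nonneg ?_ ?_, sub_mul_sub_le_four ?_ ?_ ?_ ?_ ?_⟩,
    ⟨mul_nonneg ?_ ?_, sub_mul_sub_le_four ?_ ?_ ?_ ?_ ?_⟩⟩ <;> linarith

theorem nonadjacent_prod_le_sixteen :
    (c - a) * (e - c) * ((d - a) * (e - b) * ((e - a) * (d - b))) ≤ 16 := by
  obtain ⟨⟨-, hQ⟩, ⟨hP₀, hP⟩, ⟨hP'₀, hP'⟩⟩ := nonadjacent_factor_bounds h₀ hab hbc hcd hde h₁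
  calc _ ≤ 1 * (4 * 4) :=
        mul_le_mul hQ (mul_le_mul hP hP' hP'₀ (by norm_num)) (mul_nonneg hP₀ hP'₀) zero_le_one
    _ = 16 := by norm_num

theorem eq_of_sixteen_le_nonadjacent_prod
    (h : 16 ≤ (c - a) * (e - c) * ((d - a) * (e - b) * ((e - a) * (d - b)))) :
    a = -1 ∧ b = -1 ∧ c = 0 ∧ d = 1 ∧ e = 1 := by
  obtain ⟨⟨hQ₀, hQ⟩, ⟨hP₀, hP⟩, ⟨hP'₀, hP'⟩⟩ := nonadjacent_factor_bounds h₀ hab hbc hcd hde h₁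
  obtain ⟨hQ_eq, hPP'_eq⟩ := eq_and_eq_of_mul_le_mul_of_le hQ
    (mul_le_mul hP hP' hP'₀ (by norm_num)) hQ₀ one_pos (by norm_num) (by linarith)
  obtain ⟨hP_eq, -⟩ := eq_and_eq_of_mul_le_mul_of_le hP hP' hP₀ (by norm_num) (by norm_num)
    hPP'_eq.ge
  obtain ⟨hda, heb⟩ := eq_and_eq_of_mul_le_mul_of_le (by linarith) (by linarith) (by linarith)
    two_pos two_pos (by linarith : (2 : ℝ) * 2 ≤ (d - a) * (e - b))
  obtain ⟨rfl, rfl, rfl, rfl⟩ : a = -1 ∧ b = -1 ∧ d = 1 ∧ e = 1 := by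
    refine ⟨?_, ?_, ?_, ?_⟩ <;> linarith
  exact ⟨rfl, rfl, pow_eq_zero_iff two_ne_zero |>.1 (by linear_combination -hQ_eq), rfl, rfl⟩

end FivePoints

/-- For r = 4, the maximum of F(ξ) = ∏_{j > i+1} (ξ_j - ξ_i) over
-1 ≤ ξ_1 ≤ ... ≤ ξ_5 ≤ 1 is attained exactly at ξ = (-1, -1, 0, 1, 1). -/
theorem stmt13 (ξ : Fin 5 → ℝ) (hmono : Monotone ξ)
    (hI : ∀ i, ξ i ∈ Set.Icc (-1 : ℝ) 1) :
    (∀ η : Fin 5 → ℝ, Monotone η → (∀ i, η i ∈ Set.Icc (-1 : ℝ) 1) →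
      (∏ i : Fin 5,
          ∏ j ∈ (Finset.Ioi i).filter (fun j : Fin 5 => (i : ℕ) + 1 < (j : ℕ)),
            (η j - η i)) ≤
        ∏ i : Fin 5,
          ∏ j ∈ (Finset.Ioi i).filter (fun j : Fin 5 => (i : ℕ) + 1 < (j : ℕ)),
            (ξ j - ξ i)) ↔
      (ξ 0 = -1 ∧ ξ 1 = -1 ∧ ξ 2 = 0 ∧ ξ 3 = 1 ∧ ξ 4 = 1) := by
  simp only [prod_sub_nonadjacent_fin_five]
  constructor
  · intro hmax
    have hopt := hmax ![-1, -1, 0, 1, 1]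
      (Fin.monotone_iff_le_succ.2 fun i => by fin_cases i <;> simp [Fin.succ])
      fun i => by fin_cases i <;> simp
    refine eq_of_sixteen_le_nonadjacent_prod (hI 0).1 (hmono (by decide)) (hmono (by decide))
      (hmono (by decide)) (hmono (by decide)) (hI 4).2 ?_
    convert hopt using 1
    norm_num [Matrix.cons_val_two, Matrix.cons_val_three, Matrix.cons_val_four]
  · rintro ⟨h0, h1, h2, h3, h4⟩ η hη hηI
    convert nonadjacent_prod_le_sixteen (hηI 0).1 (hη (by decide : (0 : Fin 5) ≤ 1))
      (hη (by decide : (1 : Fin 5) ≤ 2)) (hη (by decide : (2 : Fin 5) ≤ 3))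
      (hη (by decide : (3 : Fin 5) ≤ 4)) (hηI 4).2 using 1
    rw [h0, h1, h2, h3, h4]
    norm_num
end

section
/- For each j ∈ ℕ₀ and 0 < ρ < π/2, the Chebyshev polynomial of the second kind U_j is an eigenfunction of the segmental averaging operator K_ρ with eigenvalue (1/(j+1))·(sin((j+1)ρ)/sin ρ): for all t ∈ (0,π), K_ρ U_j(cos t) = (1/(j+1))·(sin((j+1)ρ)/sin ρ)·U_j(cos t). -/
open Polynomial Real intervalIntegral

/-- The Chebyshev polynomials of the second kind are eigenfunctions of
the segmental averaging operator K_ρ with eigenvalue sin((j+1)ρ)/((j+1) sin ρ). -/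
theorem stmt14 (j : ℕ) (ρ t : ℝ) (hρ : 0 < ρ) (hρ' : ρ < π / 2)
    (ht : t ∈ Set.Ioo 0 π) :
    (Real.cos (t - ρ) - Real.cos (t + ρ))⁻¹ *
        ∫ x in Real.cos (t + ρ)..Real.cos (t - ρ), (Polynomial.Chebyshev.U ℝ j).eval x =
      (1 / (j + 1 : ℝ)) * (Real.sin ((j + 1) * ρ) / Real.sin ρ) *
        (Polynomial.Chebyshev.U ℝ j).eval (Real.cos t) := by
  obtain ⟨ht0, htπ⟩ := ht
  have hst : Real.sin t ≠ 0 := ne_of_gt (Real.sin_pos_of_pos_of_lt_pi ht0 htπ)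
  have hsρ : Real.sin ρ ≠ 0 :=
    ne_of_gt (Real.sin_pos_of_pos_of_lt_pi hρ (hρ'.trans (half_lt_self Real.pi_pos)))
  have hj : ((j : ℝ) + 1) ≠ 0 := by positivity
  -- FTC: integral of U j is T (j+1) / (j+1)
  have hderiv : ∀ x : ℝ, HasDerivAt (fun y => (Polynomial.Chebyshev.T ℝ (j + 1)).eval y)
      (((j : ℝ) + 1) * (Polynomial.Chebyshev.U ℝ j).eval x) x := by
    intro x
    have h := (Polynomial.Chebyshev.T ℝ (j + 1)).hasDerivAt x
    rw [Polynomial.Chebyshev.T_derivative_eq_U] at h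
    simpa using h
  have hint : ∫ x in Real.cos (t + ρ)..Real.cos (t - ρ), (Polynomial.Chebyshev.U ℝ j).eval x
      = (((j : ℝ) + 1))⁻¹ * ((Polynomial.Chebyshev.T ℝ (j + 1)).eval (Real.cos (t - ρ))
        - (Polynomial.Chebyshev.T ℝ (j + 1)).eval (Real.cos (t + ρ))) := by
    have := intervalIntegral.integral_eq_sub_of_hasDerivAt
      (f := fun y => (Polynomial.Chebyshev.T ℝ (j + 1)).eval y)
      (f' := fun x => ((j : ℝ) + 1) * (Polynomial.Chebyshev.U ℝ j).eval x)
      (a := Real.cos (t + ρ)) (b := Real.cos (t - ρ))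
      (fun x _ => hderiv x)
      ((continuous_const.mul (Polynomial.Chebyshev.U ℝ j).continuous_aeval).intervalIntegrable _ _)
    rw [inv_mul_eq_div, eq_div_iff hj, mul_comm]
    rw [← this, ← intervalIntegral.integral_const_mul]
  have hT : ∀ θ : ℝ, (Polynomial.Chebyshev.T ℝ (j + 1)).eval (Real.cos θ)
      = Real.cos (((j : ℝ) + 1) * θ) := by
    intro θ
    have := Polynomial.Chebyshev.T_real_cos θ (j + 1)
    push_cast at this
    exact this
  have hU : (Polynomial.Chebyshev.U ℝ j).eval (Real.cos t) * Real.sin t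
      = Real.sin (((j : ℝ) + 1) * t) := by
    have := Polynomial.Chebyshev.U_real_cos t j
    push_cast at this
    exact this
  rw [hint, hT, hT]
  set c : ℝ := (j : ℝ) + 1 with hc
  have h1 : Real.cos (c * (t - ρ)) - Real.cos (c * (t + ρ))
      = 2 * Real.sin (c * t) * Real.sin (c * ρ) := by
    rw [Real.cos_sub_cos,
      show (c * (t - ρ) + c * (t + ρ)) / 2 = c * t by ring,
      show (c * (t - ρ) - c * (t + ρ)) / 2 = -(c * ρ) by ring, Real.sin_neg]
    ring
  have h2 : Real.cos (t - ρ) - Real.cos (t + ρ) = 2 * Real.sin t * Real.sin ρ := by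
    rw [Real.cos_sub_cos,
      show (t - ρ + (t + ρ)) / 2 = t by ring,
      show (t - ρ - (t + ρ)) / 2 = -ρ by ring, Real.sin_neg]
    ring
  have hU' : (Polynomial.Chebyshev.U ℝ j).eval (Real.cos t) = Real.sin (c * t) / Real.sin t :=
    (eq_div_iff hst).mpr hU
  rw [h1, h2, hU']
  field_simp
end

section
/- Let J = [−c, c] with 0 < c < 1 and let p be a polynomial of degree at most r−1. Then sup_{x ∈ [−1,1]} |p(x)| ≤ (sup_{x ∈ J} |p(x)|) · T_{r-1}(1/c), where T_{r-1} is the Chebyshev polynomial of the first kind of degree r−1. -/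
/-!
By the extremal property of Chebyshev polynomials
(`eval_iterate_derivative_le_of_forall_abs_le_one`), a real polynomial of degree at most `n`
bounded by `1` on `[-1, 1]` is bounded by `T n` on `[1, ∞)`, where `T n = cosh (n · arcosh)` is
increasing; reflecting `x ↦ -x` covers `(-∞, -1]`. Rescaling `[-c, c]` to `[-1, 1]` and dividing
by the sup of `|p|` on `[-c, c]` reduces the theorem to this bound at the point `1 / c`.
-/

open Polynomial Real

namespace Polynomial.Chebyshev

theorem eval_T_real_le_eval_T_real {n : ℤ} {x y : ℝ} (hx : 1 ≤ x) (hxy : x ≤ y) :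
    (T ℝ n).eval x ≤ (T ℝ n).eval y := by
  have hy : 1 ≤ y := hx.trans hxy
  rw [← cosh_arcosh hx, ← cosh_arcosh hy, T_real_cosh, T_real_cosh, cosh_le_cosh, abs_mul,
    abs_mul, abs_of_nonneg (arcosh_nonneg hx), abs_of_nonneg (arcosh_nonneg hy)]
  gcongr
  exact (arcosh_le_arcosh (by linarith) (by linarith)).2 hxy

theorem abs_eval_le_eval_T_real_of_one_le {n : ℕ} {P : ℝ[X]} (hPdeg : P.natDegree ≤ n)
    (hPbnd : ∀ x ∈ Set.Icc (-1) 1, |P.eval x| ≤ 1) {x : ℝ} (hx : 1 ≤ x) :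
    |P.eval x| ≤ (T ℝ n).eval x := by
  have hle (Q : ℝ[X]) (hQdeg : Q.natDegree ≤ n) (hQbnd : ∀ x ∈ Set.Icc (-1) 1, |Q.eval x| ≤ 1) :
      Q.eval x ≤ (T ℝ n).eval x :=
    eval_iterate_derivative_le_of_forall_abs_le_one (k := 0) hx
      (degree_le_of_natDegree_le hQdeg) hQbnd
  have hneg := hle (-P) (by rwa [natDegree_neg]) (by simpa only [eval_neg, abs_neg] using hPbnd)
  rw [eval_neg] at hneg
  exact abs_le.2 ⟨by linarith, hle P hPdeg hPbnd⟩

theorem abs_eval_le_eval_T_real {n : ℕ} {P : ℝ[X]} (hPdeg : P.natDegree ≤ n)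
    (hPbnd : ∀ x ∈ Set.Icc (-1) 1, |P.eval x| ≤ 1) {x a : ℝ} (ha : 1 ≤ a) (hx : |x| ≤ a) :
    |P.eval x| ≤ (T ℝ n).eval a := by
  wlog hx0 : 0 ≤ x generalizing P x
  · have hdeg : (P.comp (-X)).natDegree ≤ n := by simpa [natDegree_comp] using hPdeg
    have hbnd : ∀ y ∈ Set.Icc (-1 : ℝ) 1, |(P.comp (-X)).eval y| ≤ 1 := fun y hy => by
      simpa using hPbnd (-y) ⟨by linarith [hy.2], by linarith [hy.1]⟩
    simpa using this hdeg hbnd (x := -x) (by rwa [abs_neg]) (by linarith)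
  rw [abs_of_nonneg hx0] at hx
  rcases le_total x 1 with hx1 | hx1
  · exact (hPbnd x ⟨by linarith, hx1⟩).trans (one_le_eval_T_real n ha)
  · exact (abs_eval_le_eval_T_real_of_one_le hPdeg hPbnd hx1).trans
      (eval_T_real_le_eval_T_real hx1 hx)

theorem abs_eval_le_mul_eval_T_real {n : ℕ} {p : ℝ[X]} (hp : p.natDegree ≤ n) {c M : ℝ}
    (hc : 0 < c) (hM : ∀ y ∈ Set.Icc (-c) c, |p.eval y| ≤ M) {x b : ℝ} (hcb : c ≤ b)
    (hx : |x| ≤ b) :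
    |p.eval x| ≤ M * (T ℝ n).eval (b / c) := by
  obtain hM0 | hM0 := ((abs_nonneg _).trans (hM 0 ⟨by linarith, hc.le⟩)).eq_or_lt
  · have hp0 : p = 0 := eq_zero_of_infinite_isRoot p <|
      (Set.Icc_infinite (by linarith : -c < c)).mono fun y hy =>
        abs_nonpos_iff.1 (hM0 ▸ hM y hy)
    simp [hp0, ← hM0]
  set q := Polynomial.C M⁻¹ * p.comp (Polynomial.C c * X)
  have hq (y : ℝ) : q.eval y = M⁻¹ * p.eval (c * y) := by simp [q]
  have hqdeg : q.natDegree ≤ n := by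
    refine natDegree_C_mul_le _ _ |>.trans ?_
    rwa [natDegree_comp, natDegree_C_mul_X _ hc.ne', mul_one]
  have hqbnd : ∀ y ∈ Set.Icc (-1 : ℝ) 1, |q.eval y| ≤ 1 := fun y hy => by
    rw [hq, abs_mul, abs_inv, abs_of_pos hM0, inv_mul_le_one₀ hM0]
    exact hM _ ⟨by nlinarith [hy.1], by nlinarith [hy.2]⟩
  have key := abs_eval_le_eval_T_real hqdeg hqbnd (x := x / c) (a := b / c)
    ((one_le_div₀ hc).2 hcb) (by rw [abs_div, abs_of_pos hc]; gcongr)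
  rwa [hq, mul_div_cancel₀ _ hc.ne', abs_mul, abs_inv, abs_of_pos hM0, inv_mul_le_iff₀ hM0] at key

end Polynomial.Chebyshev

theorem stmt18_general (r : ℕ) (c : ℝ) (hc : 0 < c) (hc1 : c < 1)
    (p : Polynomial ℝ) (hp : p.natDegree ≤ r - 1) :
    ∀ x ∈ Set.Icc (-1 : ℝ) 1,
      |p.eval x| ≤ (sSup ((fun y => |p.eval y|) '' Set.Icc (-c) c)) *
        (Polynomial.Chebyshev.T ℝ ((r : ℤ) - 1)).eval (1 / c) := by
  intro x hx
  have hbdd : BddAbove ((fun y => |p.eval y|) '' Set.Icc (-c) c) :=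
    (isCompact_Icc.image (continuous_abs.comp p.continuous)).bddAbove
  -- at `r = 0` the degree bound `r - 1` truncates to `0` while `T (-1) = T 1`
  rw [← Polynomial.Chebyshev.T_natAbs]
  exact Polynomial.Chebyshev.abs_eval_le_mul_eval_T_real (hp.trans (by omega)) hc
    (fun y hy => le_csSup hbdd ⟨y, hy, rfl⟩) hc1.le (abs_le.2 hx)

/-- Extremal growth property of Chebyshev polynomials: for a polynomial
p of degree at most r-1 and J = [-c, c] with 0 < c < 1, the sup of |p| on [-1,1] is
bounded by (sup of |p| on J) times T_{r-1}(1/c). -/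
theorem stmt18 (r : ℕ) (hr : 1 ≤ r) (c : ℝ) (hc : 0 < c) (hc1 : c < 1)
    (p : Polynomial ℝ) (hp : p.natDegree ≤ r - 1) :
    ∀ x ∈ Set.Icc (-1 : ℝ) 1,
      |p.eval x| ≤ (sSup ((fun y => |p.eval y|) '' Set.Icc (-c) c)) *
        (Polynomial.Chebyshev.T ℝ ((r : ℤ) - 1)).eval (1 / c) :=
  stmt18_general r c hc hc1 p hp
end

section
/- Fix r ≥ 2 and consider, for each 0 ≤ ρ < π/r, the Fekete segments S^Fek(ρ) in the uniform arc-length class (arc-midpoints at the Fekete nodes of [−cos ρ, cos ρ]). Then the function ρ ↦ det V^U(S^Fek(ρ)) is decreasing in ρ on [0, π/r); in particular its maximum over admissible ρ is attained at ρ = 0, where the Fekete segments degenerate to the Fekete nodes of [−1,1]. -/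
open Polynomial Real

private lemma abs_sin_nat_mul_le (n : ℕ) (x : ℝ) :
    |Real.sin (n * x)| ≤ n * |Real.sin x| := by
  induction n with
  | zero => simp
  | succ n ih =>
    have h : ((n + 1 : ℕ) : ℝ) * x = n * x + x := by push_cast; ring
    rw [h, Real.sin_add]
    calc |Real.sin (n * x) * Real.cos x + Real.cos (n * x) * Real.sin x|
        ≤ |Real.sin (n * x) * Real.cos x| + |Real.cos (n * x) * Real.sin x| := abs_add_le _ _
      _ ≤ |Real.sin (n * x)| * 1 + 1 * |Real.sin x| := by
          rw [abs_mul, abs_mul]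
          gcongr
          · exact Real.abs_cos_le_one x
          · exact Real.abs_cos_le_one _
      _ ≤ (n : ℝ) * |Real.sin x| + 1 * |Real.sin x| := by
          rw [mul_one]
          gcongr
      _ = ((n + 1 : ℕ) : ℝ) * |Real.sin x| := by push_cast; ring

private lemma U_abs_le (n : ℕ) (y : ℝ) (hy : y ∈ Set.Icc (-1 : ℝ) 1) :
    |(Polynomial.Chebyshev.U ℝ (n : ℕ)).eval y| ≤ (n : ℝ) + 1 := by
  have hcont : Continuous fun z : ℝ => |(Polynomial.Chebyshev.U ℝ (n : ℕ)).eval z| :=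
    (Polynomial.continuous _).abs
  have hsub : Set.Ioo (-1 : ℝ) 1 ⊆
      {z : ℝ | |(Polynomial.Chebyshev.U ℝ (n : ℕ)).eval z| ≤ (n : ℝ) + 1} := by
    intro z hz
    set θ := Real.arccos z with hθdef
    have hθ1 : 0 < θ := Real.arccos_pos.2 hz.2
    have hθ2 : θ < π := lt_of_le_of_ne (Real.arccos_le_pi z)
      (by rw [Ne, Real.arccos_eq_pi]; intro h; linarith [hz.1])
    have hsin : 0 < Real.sin θ := Real.sin_pos_of_pos_of_lt_pi hθ1 hθ2
    have hcos : Real.cos θ = z := Real.cos_arccos hz.1.le hz.2.le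
    have hkey := Polynomial.Chebyshev.U_real_cos θ (n : ℤ)
    rw [hcos] at hkey
    have heval : (Polynomial.Chebyshev.U ℝ (n : ℕ)).eval z
        = Real.sin (((n : ℝ) + 1) * θ) / Real.sin θ := by
      field_simp
      rw [hkey]
      push_cast
      ring_nf
    have habs : |Real.sin (((n : ℝ) + 1) * θ)| ≤ ((n : ℝ) + 1) * Real.sin θ := by
      have := abs_sin_nat_mul_le (n + 1) θ
      push_cast at this
      rwa [abs_of_pos hsin] at this
    rw [Set.mem_setOf_eq, heval, abs_div, abs_of_pos hsin, div_le_iff₀ hsin]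
    exact habs
  have hclosed : IsClosed {z : ℝ | |(Polynomial.Chebyshev.U ℝ (n : ℕ)).eval z| ≤ (n : ℝ) + 1} :=
    isClosed_le hcont continuous_const
  have : Set.Icc (-1 : ℝ) 1 ⊆
      {z : ℝ | |(Polynomial.Chebyshev.U ℝ (n : ℕ)).eval z| ≤ (n : ℝ) + 1} := by
    rw [← closure_Ioo (by norm_num : (-1 : ℝ) ≠ 1)]
    exact hclosed.closure_subset_iff.2 hsub
  exact this hy

/-- `sin (k x) / sin x`, with the limiting value `k` at `x = 0`. -/
noncomputable def gfun (k : ℕ) (x : ℝ) : ℝ :=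
  if x = 0 then (k : ℝ) else Real.sin (k * x) / Real.sin x

private lemma gfun_rec (k : ℕ) {x : ℝ} (hx0 : 0 ≤ x) (hxπ : x < π) :
    gfun (k + 1) x = Real.cos x * gfun k x + Real.cos (k * x) := by
  unfold gfun
  by_cases h : x = 0
  · subst h; simp
  · have hxpos : 0 < x := lt_of_le_of_ne hx0 (Ne.symm h)
    have hs : Real.sin x ≠ 0 := ne_of_gt (Real.sin_pos_of_pos_of_lt_pi hxpos hxπ)
    simp only [if_neg h]
    have hcast : ((k + 1 : ℕ) : ℝ) * x = k * x + x := by push_cast; ring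
    rw [hcast, Real.sin_add]
    field_simp

private lemma gfun_nonneg (k : ℕ) {x : ℝ} (hx0 : 0 ≤ x) (hxπ : x ≤ π)
    (hk : (k : ℝ) * x ≤ π) : 0 ≤ gfun k x := by
  unfold gfun
  by_cases h : x = 0
  · simp [h]
  · simp only [if_neg h]
    apply div_nonneg
    · exact Real.sin_nonneg_of_nonneg_of_le_pi (by positivity) hk
    · exact Real.sin_nonneg_of_nonneg_of_le_pi hx0 hxπ

private lemma gfun_anti (k : ℕ) (hk : 1 ≤ k) :
    AntitoneOn (gfun k) (Set.Ico 0 (π / k)) := by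
  induction k with
  | zero => omega
  | succ k ih =>
    by_cases hk1 : k = 0
    · -- base case k + 1 = 1
      subst hk1
      intro a ha b hb hab
      have hval : ∀ x : ℝ, x ∈ Set.Ico 0 (π / (1 : ℕ)) → gfun 1 x = 1 := by
        intro x hx
        unfold gfun
        by_cases h : x = 0
        · simp [h]
        · have hxpos : 0 < x := lt_of_le_of_ne hx.1 (Ne.symm h)
          have hxπ : x < π := by
            have := hx.2; simpa using this
          have hs : Real.sin x ≠ 0 := ne_of_gt (Real.sin_pos_of_pos_of_lt_pi hxpos hxπ)
          simp [h, hs]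
      rw [hval a ha, hval b hb]
    · -- inductive step, k ≥ 1
      have hk1' : 1 ≤ k := by omega
      have IH := ih hk1'
      intro a ha b hb hab
      have hπpos : (0 : ℝ) < π := Real.pi_pos
      have hkpos : (0 : ℝ) < k := by exact_mod_cast Nat.pos_of_ne_zero hk1
      have hk1pos : (0 : ℝ) < (k : ℝ) + 1 := by positivity
      have hcastk : ((k + 1 : ℕ) : ℝ) = (k : ℝ) + 1 := by push_cast; ring
      have hble : b < π / ((k : ℝ) + 1) := by
        have := hb.2; rwa [hcastk] at this
      have hale : a < π / ((k : ℝ) + 1) := by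
        have := ha.2; rwa [hcastk] at this
      have hdivle : π / ((k : ℝ) + 1) ≤ π / k := by gcongr; linarith
      have hk1r : (1 : ℝ) ≤ (k : ℝ) := by exact_mod_cast hk1'
      have h2k : (2 : ℝ) ≤ (k : ℝ) + 1 := by linarith
      have hdiv2 : π / ((k : ℝ) + 1) ≤ π / 2 :=
        div_le_div_of_nonneg_left hπpos.le (by norm_num) h2k
      have hbπ : b < π := lt_of_lt_of_le hble (by
        calc π / ((k : ℝ) + 1) ≤ π / 1 := by gcongr; linarith
          _ = π := by ring)
      have haπ : a < π := lt_of_le_of_lt hab hbπ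
      have hkb : (k : ℝ) * b ≤ π := by
        have : (k : ℝ) * b ≤ (k : ℝ) * (π / ((k : ℝ) + 1)) := by
          apply mul_le_mul_of_nonneg_left hble.le hkpos.le
        calc (k : ℝ) * b ≤ (k : ℝ) * (π / ((k : ℝ) + 1)) := this
          _ ≤ π := by
            rw [← mul_div_assoc, div_le_iff₀ hk1pos]
            nlinarith
      have hka : (k : ℝ) * a ≤ π := le_trans (by nlinarith [ha.1] : (k:ℝ)*a ≤ (k:ℝ)*b) hkb
      rw [gfun_rec k hb.1 hbπ, gfun_rec k ha.1 haπ]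
      have hmemb : b ∈ Set.Ico 0 (π / (k : ℝ)) := ⟨hb.1, lt_of_lt_of_le hble hdivle⟩
      have hmema : a ∈ Set.Ico 0 (π / (k : ℝ)) := ⟨ha.1, lt_of_lt_of_le hale hdivle⟩
      have hg : gfun k b ≤ gfun k a := by
        have := IH (by exact_mod_cast hmema) (by exact_mod_cast hmemb) hab
        exact this
      have hgb0 : 0 ≤ gfun k b := gfun_nonneg k hb.1 hbπ.le hkb
      have hcosb0 : 0 ≤ Real.cos b :=
        Real.cos_nonneg_of_mem_Icc ⟨by linarith [hb.1], le_trans hble.le hdiv2⟩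
      have hcosab : Real.cos b ≤ Real.cos a :=
        Real.cos_le_cos_of_nonneg_of_le_pi ha.1 hbπ.le hab
      have hcosa0 : 0 ≤ Real.cos a := le_trans hcosb0 hcosab
      have hcosk : Real.cos ((k : ℝ) * b) ≤ Real.cos ((k : ℝ) * a) :=
        Real.cos_le_cos_of_nonneg_of_le_pi (mul_nonneg hkpos.le ha.1) hkb
          (mul_le_mul_of_nonneg_left hab hkpos.le)
      have h1 : Real.cos b * gfun k b ≤ Real.cos a * gfun k a :=
        mul_le_mul hcosab hg hgb0 hcosa0
      exact add_le_add h1 hcosk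

/-- The normalized Vandermonde determinant of the Fekete segments in
the uniform arc-length class, det V^U(S^Fek(ρ)) = D(ρ)·M(ρ), is a decreasing
function of the arc-radius ρ on [0, π/r); here D(ρ) = ∏_{j=1}^r sin(jρ)/(j sin ρ)
(equal to 1 at ρ = 0) and M(ρ) is the maximal nodal Vandermonde determinant over
node sets in [-cos ρ, cos ρ].  In particular the maximum over ρ is attained at
ρ = 0, where the Fekete segments degenerate to the Fekete nodes of [-1,1]. -/
theorem stmt19 (r : ℕ) (hr : 2 ≤ r) :
    AntitoneOn (fun ρ : ℝ =>
        (if ρ = 0 then 1 else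
          ∏ j ∈ Finset.range r, Real.sin ((j + 1) * ρ) / ((j + 1) * Real.sin ρ)) *
        sSup {d : ℝ | ∃ y : Fin r → ℝ, (∀ i, |y i| ≤ Real.cos ρ) ∧
          d = |(Matrix.of fun i j : Fin r =>
              (Polynomial.Chebyshev.U ℝ (j : ℕ)).eval (y i)).det|})
      (Set.Ico 0 (π / r)) := by
  have hπ : (0 : ℝ) < π := Real.pi_pos
  have hrpos : (0 : ℝ) < (r : ℝ) := by exact_mod_cast (by omega : 0 < r)
  have hr2 : (2 : ℝ) ≤ (r : ℝ) := by exact_mod_cast hr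
  have hπr2 : π / r ≤ π / 2 := div_le_div_of_nonneg_left hπ.le (by norm_num) hr2
  -- membership of 0 in the sup-set
  have hmem : ∀ ρ : ℝ, 0 ≤ Real.cos ρ →
      (0 : ℝ) ∈ {d : ℝ | ∃ y : Fin r → ℝ, (∀ i, |y i| ≤ Real.cos ρ) ∧
        d = |(Matrix.of fun i j : Fin r =>
            (Polynomial.Chebyshev.U ℝ (j : ℕ)).eval (y i)).det|} := by
    intro ρ hρ
    refine ⟨fun _ => 0, fun i => by simpa using hρ, ?_⟩
    rw [Matrix.det_zero_of_row_eq (i := (⟨0, by omega⟩ : Fin r))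
      (j := (⟨1, by omega⟩ : Fin r)) (by simp [Fin.ext_iff]) (by funext j; rfl), abs_zero]
  -- boundedness of the sup-set
  have hbdd : ∀ ρ : ℝ, Real.cos ρ ≤ 1 →
      BddAbove {d : ℝ | ∃ y : Fin r → ℝ, (∀ i, |y i| ≤ Real.cos ρ) ∧
        d = |(Matrix.of fun i j : Fin r =>
            (Polynomial.Chebyshev.U ℝ (j : ℕ)).eval (y i)).det|} := by
    intro ρ hρ1
    refine ⟨(r.factorial : ℝ) * (r : ℝ) ^ r, ?_⟩
    rintro d ⟨y, hy, rfl⟩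
    have hent : ∀ i j : Fin r,
        |(Matrix.of fun i j : Fin r =>
            (Polynomial.Chebyshev.U ℝ (j : ℕ)).eval (y i)) i j| ≤ (r : ℝ) := by
      intro i j
      have hyi : y i ∈ Set.Icc (-1 : ℝ) 1 := by
        have := (hy i).trans hρ1
        exact abs_le.1 this
      have h1 := U_abs_le (j : ℕ) (y i) hyi
      have h2 : ((j : ℕ) : ℝ) + 1 ≤ (r : ℝ) := by
        have := j.isLt
        exact_mod_cast Nat.succ_le_of_lt this
      simpa using le_trans h1 h2
    have := Matrix.det_le (abv := (AbsoluteValue.abs : AbsoluteValue ℝ ℝ)) hent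
    simpa [Fintype.card_fin, nsmul_eq_mul] using this
  intro a ha b hb hab
  obtain ⟨ha0, haπ⟩ := ha
  obtain ⟨hb0, hbπ⟩ := hb
  have hb2 : b < π / 2 := lt_of_lt_of_le hbπ hπr2
  have hbπ' : b < π := lt_of_lt_of_le hbπ (by
    calc π / r ≤ π / 1 := div_le_div_of_nonneg_left hπ.le (by norm_num) (by linarith)
      _ = π := by ring)
  have hcosb0 : 0 ≤ Real.cos b := Real.cos_nonneg_of_mem_Icc ⟨by linarith, hb2.le⟩
  have hcosab : Real.cos b ≤ Real.cos a :=
    Real.cos_le_cos_of_nonneg_of_le_pi ha0 hbπ'.le hab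
  have hcosa0 : 0 ≤ Real.cos a := le_trans hcosb0 hcosab
  have hcosa1 : Real.cos a ≤ 1 := Real.cos_le_one a
  have hcosb1 : Real.cos b ≤ 1 := Real.cos_le_one b
  simp only
  -- rewrite the D factor via gfun
  have hDeq : ∀ ρ : ℝ, 0 ≤ ρ → ρ < π / r →
      (if ρ = 0 then (1 : ℝ) else
        ∏ j ∈ Finset.range r, Real.sin ((j + 1) * ρ) / ((j + 1) * Real.sin ρ))
      = ∏ j ∈ Finset.range r, gfun (j + 1) ρ / ((j : ℝ) + 1) := by
    intro ρ hρ0 hρπ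
    by_cases h : ρ = 0
    · rw [if_pos h, h]
      symm
      apply Finset.prod_eq_one
      intro j _
      have : gfun (j + 1) 0 = ((j : ℝ) + 1) := by unfold gfun; simp
      rw [this, div_self (by positivity)]
    · rw [if_neg h]
      refine Finset.prod_congr rfl fun j _ => ?_
      unfold gfun
      rw [if_neg h, div_div, mul_comm (Real.sin ρ) ((j : ℝ) + 1)]
      push_cast
      ring_nf
  rw [hDeq a ha0 haπ, hDeq b hb0 hbπ]
  -- facts about the products
  have hDfac : ∀ j ∈ Finset.range r, (0 : ℝ) ≤ gfun (j + 1) b / ((j : ℝ) + 1) := by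
    intro j hj
    have hj' : (j : ℕ) + 1 ≤ r := Finset.mem_range.1 hj
    have hjr : ((j : ℝ) + 1) ≤ (r : ℝ) := by exact_mod_cast hj'
    have hgb : 0 ≤ gfun (j + 1) b := by
      apply gfun_nonneg (j + 1) hb0 hbπ'.le
      have h1 : ((j + 1 : ℕ) : ℝ) * b ≤ (r : ℝ) * b :=
        mul_le_mul_of_nonneg_right (by push_cast; linarith) hb0
      have h2 : (r : ℝ) * b ≤ π := by
        calc (r : ℝ) * b = b * r := mul_comm _ _
          _ ≤ π := (le_div_iff₀ hrpos).1 hbπ.le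
      linarith
    positivity
  have hDle : ∀ j ∈ Finset.range r,
      gfun (j + 1) b / ((j : ℝ) + 1) ≤ gfun (j + 1) a / ((j : ℝ) + 1) := by
    intro j hj
    have hj' : (j : ℕ) + 1 ≤ r := Finset.mem_range.1 hj
    have hjr : ((j + 1 : ℕ) : ℝ) ≤ (r : ℝ) := by exact_mod_cast hj'
    have hsub : π / (r : ℝ) ≤ π / ((j + 1 : ℕ) : ℝ) :=
      div_le_div_of_nonneg_left hπ.le (by positivity) hjr
    have hmema : a ∈ Set.Ico 0 (π / ((j + 1 : ℕ) : ℝ)) := ⟨ha0, lt_of_lt_of_le haπ hsub⟩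
    have hmemb : b ∈ Set.Ico 0 (π / ((j + 1 : ℕ) : ℝ)) := ⟨hb0, lt_of_lt_of_le hbπ hsub⟩
    have := gfun_anti (j + 1) (by omega) hmema hmemb hab
    gcongr
  have hDab : (∏ j ∈ Finset.range r, gfun (j + 1) b / ((j : ℝ) + 1))
      ≤ ∏ j ∈ Finset.range r, gfun (j + 1) a / ((j : ℝ) + 1) :=
    Finset.prod_le_prod hDfac hDle
  have hDa0 : (0 : ℝ) ≤ ∏ j ∈ Finset.range r, gfun (j + 1) a / ((j : ℝ) + 1) :=
    le_trans (Finset.prod_nonneg hDfac) hDab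
  -- facts about the sups
  have hsubset : {d : ℝ | ∃ y : Fin r → ℝ, (∀ i, |y i| ≤ Real.cos b) ∧
        d = |(Matrix.of fun i j : Fin r =>
            (Polynomial.Chebyshev.U ℝ (j : ℕ)).eval (y i)).det|} ⊆
      {d : ℝ | ∃ y : Fin r → ℝ, (∀ i, |y i| ≤ Real.cos a) ∧
        d = |(Matrix.of fun i j : Fin r =>
            (Polynomial.Chebyshev.U ℝ (j : ℕ)).eval (y i)).det|} := by
    rintro d ⟨y, hy, rfl⟩
    exact ⟨y, fun i => (hy i).trans hcosab, rfl⟩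
  have hMab := csSup_le_csSup (hbdd a hcosa1) ⟨0, hmem b hcosb0⟩ hsubset
  have hMb0 := le_csSup (hbdd b hcosb1) (hmem b hcosb0)
  exact mul_le_mul hDab hMab hMb0 hDa0
end
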